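/- Let δ be a regular cardinal and let ⟨P_α : α ≤ δ⟩ be a sequence of partitions of a set A such that P_β refines P_α whenever α ≤ β ≤ δ, the final partition P_δ is the least common refinement of ⟨P_α : α < δ⟩ (i.e., two points lie in the same piece of P_δ if and only if they lie in the same piece of P_α for every α < δ), and |P_δ| < δ. Then the sequence is eventually constant: there exists α < δ such that P_β = P_α for all β with α ≤ β ≤ δ. -/

import Mathlib

universe u

/-- A partition `Q` refines a partition `P` if every piece of `Q` is contained in a
piece of `P`. -/
def Refines {A : Type*} (Q P : Set (Set A)) : Prop :=
  ∀ s ∈ Q, ∃ t ∈ P, s ⊆ t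

/-- Two points lie in the same piece of the partition `P`. -/
def SamePiece {A : Type*} (P : Set (Set A)) (x y : A) : Prop :=
  ∃ s ∈ P, x ∈ s ∧ y ∈ s

lemma SamePiece.symm {A : Type*} {P : Set (Set A)} {x y : A} (h : SamePiece P x y) :
    SamePiece P y x :=
  let ⟨s, hs, hx, hy⟩ := h
  ⟨s, hs, hy, hx⟩

lemma Refines.samePiece {A : Type*} {Q P : Set (Set A)} (h : Refines Q P) {x y : A}
    (hxy : SamePiece Q x y) : SamePiece P x y :=
  let ⟨s, hs, hx, hy⟩ := hxy
  let ⟨t, ht, hst⟩ := h s hs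
  ⟨t, ht, hst hx, hst hy⟩

namespace Setoid.IsPartition

variable {A : Type*} {P Q : Set (Set A)}

lemma samePiece_iff_mkClasses (hP : IsPartition P) {x y : A} :
    SamePiece P x y ↔ mkClasses P hP.2 x y := by
  constructor
  · rintro ⟨s, hs, hx, hy⟩ t ht hxt
    rwa [eq_of_mem_eqv_class hP.2 ht hxt hs hx]
  · intro h
    obtain ⟨s, ⟨hs, hx⟩, -⟩ := hP.2 x
    exact ⟨s, hs, hx, h s hs hx⟩

lemma samePiece_trans (hP : IsPartition P) {x y z : A} (hxy : SamePiece P x y)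
    (hyz : SamePiece P y z) : SamePiece P x z :=
  hP.samePiece_iff_mkClasses.2 <|
    (mkClasses P hP.2).trans (hP.samePiece_iff_mkClasses.1 hxy)
      (hP.samePiece_iff_mkClasses.1 hyz)

lemma eq_of_samePiece_iff (hP : IsPartition P) (hQ : IsPartition Q)
    (h : ∀ x y, SamePiece P x y ↔ SamePiece Q x y) : P = Q := by
  rw [← classes_mkClasses P hP, ← classes_mkClasses Q hQ]
  congr 1
  ext x y
  rw [← hP.samePiece_iff_mkClasses, ← hQ.samePiece_iff_mkClasses, h]

lemma samePiece_of_reps (hQ : IsPartition Q) {R : Set (Set A)} (hR : IsPartition R)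
    (hQR : ∀ x y, SamePiece Q x y → SamePiece R x y) (rep : Q → A)
    (hrep : ∀ s : Q, rep s ∈ (s : Set A))
    (h : ∀ s t : Q, SamePiece R (rep s) (rep t) → SamePiece Q (rep s) (rep t)) {x y : A}
    (hxy : SamePiece R x y) : SamePiece Q x y := by
  obtain ⟨s, ⟨hs, hx⟩, -⟩ := hQ.2 x
  obtain ⟨t, ⟨ht, hy⟩, -⟩ := hQ.2 y
  have hxs : SamePiece Q x (rep ⟨s, hs⟩) := ⟨s, hs, hx, hrep ⟨s, hs⟩⟩
  have hyt : SamePiece Q y (rep ⟨t, ht⟩) := ⟨t, ht, hy, hrep ⟨t, ht⟩⟩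
  have hrep_R : SamePiece R (rep ⟨s, hs⟩) (rep ⟨t, ht⟩) :=
    hR.samePiece_trans (hR.samePiece_trans (hQR _ _ hxs).symm hxy) (hQR _ _ hyt)
  exact hQ.samePiece_trans (hQ.samePiece_trans hxs (h _ _ hrep_R)) hyt.symm

end Setoid.IsPartition

theorem Cardinal.mul_self_lt_of_ord_cof_eq {δ κ : Cardinal} (hreg : δ.ord.cof = δ)
    (hκ : κ < δ) : κ * κ < δ := by
  rcases le_or_gt aleph0 δ with hδ | hδ
  · exact mul_lt_of_lt hδ hκ hκ
  · have hδ_le_one : δ ≤ 1 := hreg ▸ Ordinal.cof_lt_aleph0_iff.1 (hreg.symm ▸ hδ)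
    rw [Cardinal.lt_one_iff.1 (hκ.trans_le hδ_le_one), mul_zero]
    exact hκ.trans_le' zero_le

open Cardinal in
/-- The separating index of each pair of pieces of `Q` is below `o`; there are fewer than
`cof o` such pairs, so their supremum `α₀` is still below `o`, and from `α₀` on the partitions
separate everything `Q` separates. -/
theorem exists_forall_eq_of_mk_prod_lt_cof {A : Type*} {o : Ordinal}
    (P : Ordinal → Set (Set A)) {Q : Set (Set A)} (hQ : Setoid.IsPartition Q)
    (hpart : ∀ α < o, Setoid.IsPartition (P α))
    (hrefine : ∀ α β, α ≤ β → β < o → Refines (P β) (P α))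
    (hlcr : ∀ x y, SamePiece Q x y ↔ ∀ α < o, SamePiece (P α) x y)
    (hcard : #(Q × Q) < o.cof) :
    ∃ α₀ < o, ∀ β, α₀ ≤ β → β < o → P β = Q := by
  have ho : 0 < o := pos_iff_ne_zero.2 fun h => by simp [h] at hcard
  have hsep : ∀ x y, ∃ α < o, SamePiece (P α) x y → SamePiece Q x y := by
    intro x y
    by_cases hxy : SamePiece Q x y
    · exact ⟨0, ho, fun _ => hxy⟩
    · obtain ⟨α, hα, hα_sep⟩ := not_forall₂.1 (mt (hlcr x y).2 hxy)
      exact ⟨α, hα, fun h => absurd h hα_sep⟩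
  let rep : Q → A := fun s => (Setoid.nonempty_of_mem_partition hQ s.2).some
  have hrep : ∀ s : Q, rep s ∈ (s : Set A) :=
    fun s => (Setoid.nonempty_of_mem_partition hQ s.2).some_mem
  choose g hg_lt hg_sep using fun p : Q × Q => hsep (rep p.1) (rep p.2)
  have hsup : ⨆ p, g p < o := Ordinal.iSup_lt_of_lt_cof hcard hg_lt
  have hfine : ∀ β, ⨆ p, g p ≤ β → β < o →
      ∀ x y, SamePiece (P β) x y → SamePiece Q x y :=
    fun β hβ hβo x y => hQ.samePiece_of_reps (hpart β hβo)
      (fun x y hxy => (hlcr x y).1 hxy β hβo) rep hrep (fun s t hst => hg_sep (s, t) <|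
        (hrefine _ β ((Ordinal.le_iSup g (s, t)).trans hβ) hβo).samePiece hst)
  exact ⟨_, hsup, fun β hβ hβo => (hpart β hβo).eq_of_samePiece_iff hQ fun x y =>
    ⟨hfine β hβ hβo x y, fun hxy => (hlcr x y).1 hxy β hβo⟩⟩

/-- If `δ` is regular, `⟨P_α : α ≤ δ⟩` is a ⊆-decreasing (refining) sequence of
partitions of `A` whose last term `P_δ` is the least common refinement of
`⟨P_α : α < δ⟩` and satisfies `|P_δ| < δ`, then the sequence is eventually constant. -/
theorem statement8 {A : Type u} (δ : Cardinal.{u}) (hreg : δ.ord.cof = δ)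
    (P : Ordinal.{u} → Set (Set A))
    (hpart : ∀ α ≤ δ.ord, Setoid.IsPartition (P α))
    (hrefine : ∀ α β : Ordinal.{u}, α ≤ β → β ≤ δ.ord → Refines (P β) (P α))
    (hlcr : ∀ x y : A, SamePiece (P δ.ord) x y ↔ ∀ α < δ.ord, SamePiece (P α) x y)
    (hsize : Cardinal.mk (P δ.ord) < δ) :
    ∃ α < δ.ord, ∀ β : Ordinal.{u}, α ≤ β → β ≤ δ.ord → P β = P α := by
  have hcard : Cardinal.mk (P δ.ord × P δ.ord) < δ.ord.cof := by
    rw [hreg, Cardinal.mk_prod, Cardinal.lift_id]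
    exact Cardinal.mul_self_lt_of_ord_cof_eq hreg hsize
  obtain ⟨α₀, hα₀, hstable⟩ := exists_forall_eq_of_mk_prod_lt_cof P (hpart δ.ord le_rfl)
    (fun α hα => hpart α hα.le) (fun α β hαβ hβ => hrefine α β hαβ hβ.le) hlcr hcard
  refine ⟨α₀, hα₀, fun β hβ hβδ => ?_⟩
  rw [hstable α₀ le_rfl hα₀]
  rcases hβδ.lt_or_eq with hβδ | rfl
  · exact hstable β hβ hβδ
  · rfl
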